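/- arXiv:1501.01851 — 5 statements merged into one kernel-verified Lean document; each statement's English description precedes it below -/
import Mathlib

section
/- Suppose Q : [-1, 0) → (0,∞) is continuous, t = 0 is a 'singular time' in the sense that Q(t) → ∞ as t → 0⁻, and suppose there is a constant ε₀ > 0 such that whenever s₀ < s₁ < 0 satisfy Q(s₁) = 2Q(s₀) and Q(t) ≤ Q(s₁) for all t ∈ [-1, s₁], one has ∫_{s₀}^{s₁} P(t) dt ≥ ε₀ for a given nonnegative measurable function P on [-1,0). Then ∫_{-1}^{0} P(t) dt = ∞; in particular limsup_{t→0⁻} P(t) = ∞. -/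
open MeasureTheory Filter

lemma first_hit (Q : ℝ → ℝ) (hQc : ContinuousOn Q (Set.Ico (-1) 0))
    (hsing : Tendsto Q (nhdsWithin 0 (Set.Iio 0)) atTop)
    (L : ℝ) (hL : Q (-1) < L) :
    ∃ s ∈ Set.Ioo (-1:ℝ) 0, Q s = L ∧ ∀ t ∈ Set.Ico (-1:ℝ) 0, t < s → Q t < L := by
  set A : Set ℝ := {t | t ∈ Set.Ico (-1:ℝ) 0 ∧ L ≤ Q t} with hA
  have hmem : Set.Ioo (-1:ℝ) 0 ∈ nhdsWithin (0:ℝ) (Set.Iio 0) := by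
    rw [← Set.Ioi_inter_Iio]
    exact Filter.inter_mem (nhdsWithin_le_nhds (Ioi_mem_nhds (by norm_num)))
      self_mem_nhdsWithin
  have hAne : A.Nonempty := by
    obtain ⟨a, ha1, ha2⟩ := ((hsing.eventually_ge_atTop L).and
      (eventually_of_mem hmem fun x hx => hx)).exists
    exact ⟨a, ⟨le_of_lt ha2.1, ha2.2⟩, ha1⟩
  have hbdd : BddBelow A := ⟨-1, fun a ha => ha.1.1⟩
  have hsle : ∀ a ∈ A, sInf A ≤ a := fun a ha => csInf_le hbdd ha
  set s := sInf A with hs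
  have hs0 : s < 0 := by
    obtain ⟨a, ha⟩ := hAne
    exact lt_of_le_of_lt (hsle a ha) ha.1.2
  have hs1 : -1 < s := by
    have hcw : ContinuousWithinAt Q (Set.Ico (-1) 0) (-1) :=
      hQc (-1) ⟨le_refl _, by norm_num⟩
    have h1 : Q ⁻¹' Set.Iio L ∈ nhdsWithin (-1:ℝ) (Set.Ico (-1) 0) :=
      hcw (Iio_mem_nhds hL)
    rw [Metric.mem_nhdsWithin_iff] at h1
    obtain ⟨δ, hδ, hball⟩ := h1
    have : ∀ a ∈ A, -1 + δ ≤ a := by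
      intro a ha
      by_contra hcon
      push_neg at hcon
      have : a ∈ Metric.ball (-1:ℝ) δ ∩ Set.Ico (-1) 0 := by
        constructor
        · rw [Metric.mem_ball, Real.dist_eq, abs_of_nonneg (by linarith [ha.1.1] : (0:ℝ) ≤ a - (-1))]
          linarith
        · exact ha.1
      exact absurd (hball this) (not_lt.mpr ha.2)
    linarith [le_csInf hAne this]
  have hcont : ContinuousAt Q s :=
    hQc.continuousAt (Filter.mem_of_superset (isOpen_Ioo.mem_nhds ⟨hs1, hs0⟩)
      Set.Ioo_subset_Ico_self)
  have hge : L ≤ Q s := by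
    by_contra h
    push_neg at h
    have h1 : ∀ᶠ t in nhds s, Q t < L := hcont.eventually_lt continuousAt_const h
    rw [Metric.eventually_nhds_iff] at h1
    obtain ⟨δ, hδ, hb⟩ := h1
    obtain ⟨a, ha, halt⟩ := (csInf_lt_iff hbdd hAne).mp (by linarith : s < s + δ)
    have : dist a s < δ := by
      rw [Real.dist_eq, abs_of_nonneg (by linarith [hsle a ha] : (0:ℝ) ≤ a - s)]
      linarith
    exact absurd (hb this) (not_lt.mpr ha.2)
  have hle : Q s ≤ L := by
    by_contra h
    push_neg at h
    have h1 : Q ⁻¹' Set.Ioi L ∈ nhds s := hcont (Ioi_mem_nhds h)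
    rw [Metric.mem_nhds_iff] at h1
    obtain ⟨δ, hδ, hb⟩ := h1
    have hm1 : min δ (s + 1) ≤ δ := min_le_left _ _
    have hm2 : min δ (s + 1) ≤ s + 1 := min_le_right _ _
    have hm0 : 0 < min δ (s + 1) := lt_min hδ (by linarith)
    have htb : s - min δ (s + 1) / 2 ∈ Metric.ball s δ := by
      rw [Metric.mem_ball, Real.dist_eq,
        abs_of_nonpos (by linarith : s - min δ (s + 1) / 2 - s ≤ 0)]
      linarith
    have htQ : L < Q (s - min δ (s + 1) / 2) := hb htb
    have htA : s - min δ (s + 1) / 2 ∈ A :=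
      ⟨⟨by linarith, by linarith⟩, le_of_lt htQ⟩
    have := hsle _ htA
    linarith
  refine ⟨s, ⟨hs1, hs0⟩, le_antisymm hle hge, fun t htI hts => ?_⟩
  by_contra h
  push_neg at h
  exact absurd (hsle t ⟨htI, h⟩) (not_le.mpr hts)

theorem stmt2 (ε₀ : ℝ) (hε : 0 < ε₀) (Q P : ℝ → ℝ)
    (hQc : ContinuousOn Q (Set.Ico (-1) 0))
    (hQpos : ∀ t ∈ Set.Ico (-1:ℝ) 0, 0 < Q t)
    (hsing : Tendsto Q (nhdsWithin 0 (Set.Iio 0)) atTop)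
    (hP : ∀ t ∈ Set.Ico (-1:ℝ) 0, 0 ≤ P t) (hPm : Measurable P)
    (hstep : ∀ s₀ s₁ : ℝ, -1 ≤ s₀ → s₀ < s₁ → s₁ < 0 → Q s₁ = 2 * Q s₀ →
      (∀ t ∈ Set.Icc (-1:ℝ) s₁, Q t ≤ Q s₁) → ε₀ ≤ ∫ t in s₀..s₁, P t) :
    (∫⁻ t in Set.Ico (-1:ℝ) 0, ENNReal.ofReal (P t)) = ⊤ ∧
      limsup (fun t => (P t : EReal)) (nhdsWithin 0 (Set.Iio 0)) = ⊤ := by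
  have hQm1 : 0 < Q (-1) := hQpos (-1) ⟨le_refl _, by norm_num⟩
  set L : ℕ → ℝ := fun n => (Q (-1) + 1) * 2 ^ n with hLdef
  have h2pow : ∀ n : ℕ, (1:ℝ) ≤ 2 ^ n := fun n =>
    one_le_pow₀ (by norm_num : (1:ℝ) ≤ 2)
  have hLgt : ∀ n, Q (-1) < L n := by
    intro n
    have := h2pow n
    simp only [hLdef]
    nlinarith
  have hLpos : ∀ n, 0 < L n := fun n => lt_trans hQm1 (hLgt n)
  have hLsucc : ∀ n, L (n + 1) = 2 * L n := by
    intro n; simp only [hLdef, pow_succ]; ring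
  choose s hsIoo hsQ hsmin using fun n => first_hit Q hQc hsing (L n) (hLgt n)
  have hmono : ∀ n, s n < s (n + 1) := by
    intro n
    rcases lt_trichotomy (s n) (s (n + 1)) with h | h | h
    · exact h
    · exfalso
      have : L n = L (n + 1) := by rw [← hsQ n, ← hsQ (n + 1), h]
      rw [hLsucc n] at this
      linarith [hLpos n]
    · exfalso
      have := hsmin n (s (n + 1))
        ⟨le_of_lt (hsIoo (n + 1)).1, (hsIoo (n + 1)).2⟩ h
      rw [hsQ (n + 1), hLsucc n] at this
      linarith [hLpos n, hsQ n]
  have hquad : ∀ n, ε₀ ≤ ∫ t in s n..s (n + 1), P t := by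
    intro n
    refine hstep (s n) (s (n + 1)) (le_of_lt (hsIoo n).1) (hmono n)
      (hsIoo (n + 1)).2 (by rw [hsQ, hsQ, hLsucc]) ?_
    intro t ht
    rcases eq_or_lt_of_le ht.2 with h | h
    · rw [h]
    · have := hsmin (n + 1) t ⟨ht.1, lt_trans h (hsIoo (n + 1)).2⟩ h
      rw [hsQ (n + 1)]
      exact le_of_lt this
  have hint : ∀ n, IntervalIntegrable P volume (s n) (s (n + 1)) := by
    intro n
    by_contra h
    have h2 := hquad n
    rw [intervalIntegral.integral_undef h] at h2
    linarith
  have hIocsub : ∀ n, Set.Ioc (s n) (s (n + 1)) ⊆ Set.Ico (-1:ℝ) 0 := by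
    intro n t ht
    exact ⟨le_of_lt (lt_of_le_of_lt (le_of_lt (hsIoo n).1) ht.1),
      lt_of_le_of_lt ht.2 (hsIoo (n + 1)).2⟩
  have hIoc : ∀ n, ENNReal.ofReal ε₀ ≤
      ∫⁻ t in Set.Ioc (s n) (s (n + 1)), ENNReal.ofReal (P t) := by
    intro n
    have hnn : 0 ≤ᵐ[volume.restrict (Set.Ioc (s n) (s (n + 1)))] P :=
      (ae_restrict_iff' measurableSet_Ioc).mpr
        (ae_of_all _ fun t ht => hP t (hIocsub n ht))
    have heq := ofReal_integral_eq_lintegral_ofReal (hint n).1 hnn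
    calc ENNReal.ofReal ε₀ ≤ ENNReal.ofReal (∫ t in s n..s (n + 1), P t) :=
          ENNReal.ofReal_le_ofReal (hquad n)
      _ = ENNReal.ofReal (∫ t in Set.Ioc (s n) (s (n + 1)), P t) := by
          rw [intervalIntegral.integral_of_le (le_of_lt (hmono n))]
      _ = _ := heq
  have hsm : StrictMono s := strictMono_nat_of_lt_succ hmono
  have hdisj : Pairwise (Function.onFun Disjoint
      fun n => Set.Ioc (s n) (s (n + 1))) := by
    intro i j hij
    rcases hij.lt_or_gt with h | h
    · exact Set.Ioc_disjoint_Ioc.mpr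
        (le_trans (min_le_left _ _) (le_trans (hsm.monotone h) (le_max_right _ _)))
    · exact Set.Ioc_disjoint_Ioc.mpr
        (le_trans (min_le_right _ _) (le_trans (hsm.monotone h) (le_max_left _ _)))
  have hpart1 : (∫⁻ t in Set.Ico (-1:ℝ) 0, ENNReal.ofReal (P t)) = ⊤ := by
    rw [eq_top_iff]
    calc (⊤ : ENNReal) = ∑' (_ : ℕ), ENNReal.ofReal ε₀ :=
          (ENNReal.tsum_const_eq_top_of_ne_zero
            (ENNReal.ofReal_pos.mpr hε).ne').symm
      _ ≤ ∑' n, ∫⁻ t in Set.Ioc (s n) (s (n + 1)), ENNReal.ofReal (P t) :=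
          ENNReal.tsum_le_tsum hIoc
      _ = ∫⁻ t in ⋃ n, Set.Ioc (s n) (s (n + 1)), ENNReal.ofReal (P t) :=
          (lintegral_iUnion (fun n => measurableSet_Ioc) hdisj _).symm
      _ ≤ _ := lintegral_mono_set (Set.iUnion_subset hIocsub)
  -- convergence of s to 0
  have hbddA : BddAbove (Set.range s) := by
    refine ⟨0, ?_⟩
    rintro x ⟨n, rfl⟩
    exact le_of_lt (hsIoo n).2
  have htend0 : Tendsto s atTop (nhds (⨆ n, s n)) :=
    tendsto_atTop_ciSup hsm.monotone hbddA
  have hsup_le : (⨆ n, s n) ≤ 0 := ciSup_le fun n => le_of_lt (hsIoo n).2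
  have hsup_gt : -1 < ⨆ n, s n :=
    lt_of_lt_of_le (hsIoo 0).1 (le_ciSup hbddA 0)
  have hLtop : Tendsto L atTop atTop := by
    simpa [hLdef] using
      (tendsto_pow_atTop_atTop_of_one_lt (by norm_num : (1:ℝ) < 2)).const_mul_atTop
        (by linarith : (0:ℝ) < Q (-1) + 1)
  have hsup0 : (⨆ n, s n) = 0 := by
    by_contra h
    have hlt : (⨆ n, s n) < 0 := lt_of_le_of_ne hsup_le h
    have hc : ContinuousAt Q (⨆ n, s n) :=
      hQc.continuousAt (Filter.mem_of_superset
        (isOpen_Ioo.mem_nhds ⟨hsup_gt, hlt⟩) Set.Ioo_subset_Ico_self)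
    have h1 : Tendsto (fun n => Q (s n)) atTop (nhds (Q (⨆ n, s n))) :=
      (hc.tendsto).comp htend0
    have h2 : Tendsto (fun n => Q (s n)) atTop atTop := by
      have : (fun n => Q (s n)) = L := funext fun n => hsQ n
      rw [this]; exact hLtop
    exact not_tendsto_atTop_of_tendsto_nhds h1 h2
  rw [hsup0] at htend0
  -- part 2
  have hpart2 : limsup (fun t => (P t : EReal)) (nhdsWithin 0 (Set.Iio 0)) = ⊤ := by
    by_contra hne
    have hlt : limsup (fun t => (P t : EReal)) (nhdsWithin 0 (Set.Iio 0)) < ⊤ :=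
      lt_top_iff_ne_top.mpr hne
    obtain ⟨M, hM, -⟩ := EReal.exists_between_coe_real hlt
    have hev : ∀ᶠ t in nhdsWithin 0 (Set.Iio 0), (P t : EReal) < (M : EReal) :=
      eventually_lt_of_limsup_lt hM
    rw [eventually_nhdsWithin_iff, Metric.eventually_nhds_iff] at hev
    obtain ⟨δ, hδ, hball⟩ := hev
    set M' := max M 1 with hM'
    have hM'pos : (0:ℝ) < M' := lt_of_lt_of_le one_pos (le_max_right _ _)
    have hev1 : ∀ᶠ n in atTop, -δ < s n :=
      htend0.eventually (eventually_gt_nhds (by linarith : -δ < 0))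
    have hdiff : Tendsto (fun n => s (n + 1) - s n) atTop (nhds 0) := by
      have := (htend0.comp (tendsto_add_atTop_nat 1)).sub htend0
      simpa using this
    have hev2 : ∀ᶠ n in atTop, s (n + 1) - s n < ε₀ / M' :=
      hdiff.eventually (eventually_lt_nhds (div_pos hε hM'pos))
    obtain ⟨N, hN1, hN2⟩ := (hev1.and hev2).exists
    have hPle : ∀ t ∈ Set.Icc (s N) (s (N + 1)), P t ≤ M' := by
      intro t ht
      have ht0 : t < 0 := lt_of_le_of_lt ht.2 (hsIoo (N + 1)).2
      have hdist : dist t 0 < δ := by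
        rw [Real.dist_eq, sub_zero, abs_of_nonpos (le_of_lt ht0)]
        linarith [ht.1]
      have := hball hdist ht0
      rw [EReal.coe_lt_coe_iff] at this
      exact le_trans (le_of_lt this) (le_max_left _ _)
    have hle : (∫ t in s N..s (N + 1), P t) ≤ M' * (s (N + 1) - s N) := by
      have h := intervalIntegral.integral_mono_on (le_of_lt (hmono N)) (hint N)
        (intervalIntegrable_const (c := M')) hPle
      rwa [intervalIntegral.integral_const, smul_eq_mul, mul_comm] at h
    have hquadN := hquad N
    have : M' * (s (N + 1) - s N) < ε₀ := by
      calc M' * (s (N + 1) - s N) = (s (N + 1) - s N) * M' := by ring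
        _ < (ε₀ / M') * M' := mul_lt_mul_of_pos_right hN2 hM'pos
        _ = ε₀ := div_mul_cancel₀ _ (ne_of_gt hM'pos)
    linarith
  exact ⟨hpart1, hpart2⟩
end

section
/- Fix constants C > 0, ε₀ > 0, and let λ > C·log 2/ε₀. Let Q : [-1,0) → (0,∞) be continuous with Q(t) → ∞ as t → 0⁻, and let P : [-1,0) → [0,∞) satisfy P(t)·|t| ≤ C + δ for all t near 0 (for every δ > 0 eventually). Suppose that whenever s < s' < 0 with Q(s') = 2Q(s) and Q ≤ Q(s') on [-1, s'], one has ∫_s^{s'} P dt ≥ ε₀. Then Q(t)·|t|^λ → 0 as t → 0⁻. -/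
open Filter MeasureTheory

/-!
Pick `c > C` with `c log 2 < λ ε₀`, a time `t₀` after which `P t ≤ c / |t|`, and `L` above `Q` on
`[-1, t₀]`. Let `sᵢ` be the first time `Q` reaches `2ⁱ L`. Then
`ε₀ ≤ ∫_{sᵢ}^{sᵢ₊₁} P ≤ c log (sᵢ / sᵢ₊₁)`, so `|sᵢ| ≤ rⁱ` with `r = exp (-ε₀ / c)`, and for
`t ∈ [sᵢ, sᵢ₊₁)` we get `Q t |t|^λ ≤ 2ⁱ⁺¹ L r^(iλ) = 2L (2 r^λ)ⁱ`, where `2 r^λ < 1` is exactly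
`c log 2 < λ ε₀`.
-/

open Set Real Topology

theorem exists_first_hitting_time {Q : ℝ → ℝ} {a b c L : ℝ} (hQ : ContinuousOn Q (Icc a b))
    (hac : a ≤ c) (hcb : c < b) (hlow : ∀ t ∈ Icc a c, Q t < L) (hb : L ≤ Q b) :
    ∃ s ∈ Ioc c b, Q s = L ∧ ∀ t ∈ Icc a s, Q t ≤ L := by
  set S := Icc a b ∩ Q ⁻¹' Ici L
  have hSne : S.Nonempty := ⟨b, ⟨hac.trans hcb.le, le_rfl⟩, hb⟩
  have hSbdd : BddBelow S := ⟨a, fun t ht => ht.1.1⟩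
  obtain ⟨⟨has, hsb⟩, hLs⟩ := (hQ.preimage_isClosed_of_isClosed isClosed_Icc isClosed_Ici).csInf_mem
    hSne hSbdd
  set s := sInf S
  have hbelow : ∀ t ∈ Ico a s, Q t < L := fun t ht =>
    not_le.mp fun h => ht.2.not_ge (csInf_le hSbdd ⟨⟨ht.1, ht.2.le.trans hsb⟩, h⟩)
  have hcs : c < s := by
    by_contra! h
    exact (hlow s ⟨has, h⟩).not_ge hLs
  have hsL : Q s ≤ L := by
    have hcont : ContinuousWithinAt Q (Ico a s) s :=
      (hQ s ⟨has, hsb⟩).mono fun t ht => ⟨ht.1, ht.2.le.trans hsb⟩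
    have : (𝓝[Ico a s] s).NeBot := right_nhdsWithin_Ico_neBot (hac.trans_lt hcs)
    exact le_of_tendsto hcont (eventually_nhdsWithin_of_forall fun t ht => (hbelow t ht).le)
  refine ⟨s, ⟨hcs, hsb⟩, hsL.antisymm hLs, fun t ht => ?_⟩
  rcases ht.2.lt_or_eq with h | rfl
  · exact (hbelow t ⟨ht.1, h⟩).le
  · exact hsL

theorem exists_hitting_times {Q : ℝ → ℝ} {a b c L q : ℝ} (hac : a ≤ c) (hcb : c < b)
    (hQ : ContinuousOn Q (Ico a b)) (hQb : Tendsto Q (𝓝[<] b) atTop)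
    (hlow : ∀ t ∈ Icc a c, Q t < L) (hL : 0 < L) (hq : 1 < q) :
    ∃ s : ℕ → ℝ, StrictMono s ∧ (∀ i, s i ∈ Ioo c b) ∧ (∀ i, Q (s i) = q ^ i * L) ∧
      ∀ i, ∀ t ∈ Icc a (s i), Q t ≤ q ^ i * L := by
  have hhit : ∀ i : ℕ, ∃ s ∈ Ioo c b, Q s = q ^ i * L ∧ ∀ t ∈ Icc a s, Q t ≤ q ^ i * L := by
    intro i
    obtain ⟨t₁, hLt₁, hct₁, ht₁b⟩ :=
      ((hQb.eventually_ge_atTop (q ^ i * L)).and (Ioo_mem_nhdsLT hcb)).exists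
    have hlow' : ∀ t ∈ Icc a c, Q t < q ^ i * L := fun t ht =>
      (hlow t ht).trans_le (le_mul_of_one_le_left hL.le (one_le_pow₀ hq.le))
    obtain ⟨s, ⟨hcs, hst₁⟩, hs⟩ :=
      exists_first_hitting_time (hQ.mono (Icc_subset_Ico_right ht₁b)) hac hct₁ hlow' hLt₁
    exact ⟨s, ⟨hcs, hst₁.trans_lt ht₁b⟩, hs⟩
  choose s hsI hsQ hsle using hhit
  refine ⟨s, strictMono_nat_of_lt_succ fun i => ?_, hsI, hsQ, hsle⟩
  by_contra! h
  have := hsle i (s (i + 1)) ⟨hac.trans (hsI (i + 1)).1.le, h⟩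
  rw [hsQ, pow_succ', mul_assoc] at this
  exact this.not_gt (lt_mul_of_one_lt_left (mul_pos (pow_pos (zero_lt_one.trans hq) i) hL) hq)

theorem tendsto_nhdsLT_of_dist_le_on_Ico {α : Type*} [PseudoMetricSpace α] {f : ℝ → α} {x : α}
    {s g : ℕ → ℝ} {a : ℝ} (hsa : ∀ i, s i < a) (hs : Tendsto s atTop (𝓝 a))
    (hg : Tendsto g atTop (𝓝 0)) (hf : ∀ i, ∀ t ∈ Ico (s i) (s (i + 1)), dist (f t) x ≤ g i) :
    Tendsto f (𝓝[<] a) (𝓝 x) := by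
  rw [Metric.tendsto_nhds]
  intro ε hε
  obtain ⟨N, hN⟩ := eventually_atTop.mp (hg.eventually (gt_mem_nhds hε))
  have hIco : ∀ k, N ≤ k → ∀ t ∈ Ico (s N) (s k), dist (f t) x < ε := by
    refine Nat.le_induction (fun t ht => absurd ht.2 ht.1.not_gt) fun k hNk ih t ht => ?_
    rcases lt_or_ge t (s k) with htk | hkt
    · exact ih t ⟨ht.1, htk⟩
    · exact (hf k t ⟨hkt, ht.2⟩).trans_lt (hN k hNk)
  filter_upwards [Ioo_mem_nhdsLT (hsa N)] with t ht
  obtain ⟨k, hk⟩ := eventually_atTop.mp (hs.eventually (lt_mem_nhds ht.2))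
  exact hIco (max k N) (le_max_right _ _) t ⟨ht.1.le, hk _ (le_max_left _ _)⟩

theorem integral_le_mul_log_div_of_le_div_neg {P : ℝ → ℝ} {a b c : ℝ} (hab : a ≤ b)
    (hb : b < 0) (hc : 0 ≤ c) (hP : ∀ t ∈ Icc a b, P t ≤ c / -t) :
    ∫ t in a..b, P t ≤ c * log (a / b) := by
  have ha : a < 0 := hab.trans_lt hb
  have hlog : log (a / b) = -log (b / a) := by rw [← log_inv, inv_div]
  by_cases hPi : IntervalIntegrable P volume a b
  · have hg : IntervalIntegrable (fun t : ℝ => c / -t) volume a b := by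
      refine ContinuousOn.intervalIntegrable fun t ht => ?_
      rw [uIcc_of_le hab] at ht
      exact (continuousAt_const.div continuousAt_neg (by linarith [ht.2])).continuousWithinAt
    calc ∫ t in a..b, P t ≤ ∫ t in a..b, c / -t := intervalIntegral.integral_mono_on hab hPi hg hP
      _ = c * log (a / b) := by
        simp_rw [div_neg, ← mul_one_div c]
        rw [intervalIntegral.integral_neg, intervalIntegral.integral_const_mul,
          integral_one_div_of_neg ha hb, hlog, mul_neg]
  · rw [intervalIntegral.integral_undef hPi]
    exact mul_nonneg hc (log_nonneg ((one_le_div_of_neg hb).mpr hab))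

theorem neg_le_exp_mul_neg_of_le_integral {P : ℝ → ℝ} {a b c ε : ℝ} (hab : a ≤ b) (hb : b < 0)
    (hc : 0 < c) (hP : ∀ t ∈ Icc a b, P t ≤ c / -t) (hε : ε ≤ ∫ t in a..b, P t) :
    -b ≤ exp (-(ε / c)) * -a := by
  have hlog : ε / c ≤ log (a / b) := by
    rw [div_le_iff₀' hc]
    exact hε.trans (integral_le_mul_log_div_of_le_div_neg hab hb hc.le hP)
  have hexp : exp (ε / c) * -b ≤ -a := by
    rw [← le_div_iff₀ (neg_pos.mpr hb), neg_div_neg_eq]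
    exact (le_log_iff_exp_le (div_pos_of_neg_of_neg (hab.trans_lt hb) hb)).mp hlog
  rw [exp_neg, inv_mul_eq_div, le_div_iff₀ (exp_pos _), mul_comm]
  exact hexp

theorem tendsto_mul_abs_rpow_of_geometric {Q : ℝ → ℝ} {s : ℕ → ℝ} {r q lam L : ℝ} (hr : 0 ≤ r)
    (hr1 : r < 1) (hlam : 0 ≤ lam) (hq : 0 ≤ q) (hqr : q * r ^ lam < 1) (hs : ∀ i, s i < 0)
    (hdecay : ∀ i, -s i ≤ r ^ i)
    (hQ : ∀ i, ∀ t ∈ Ico (s i) (s (i + 1)), 0 ≤ Q t ∧ Q t ≤ q ^ (i + 1) * L) :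
    Tendsto (fun t => Q t * |t| ^ lam) (𝓝[<] 0) (𝓝 0) := by
  have hs0 : Tendsto s atTop (𝓝 0) :=
    squeeze_zero_norm (fun i => by rw [Real.norm_eq_abs, abs_of_neg (hs i)]; exact hdecay i)
      (tendsto_pow_atTop_nhds_zero_of_lt_one hr hr1)
  have hg : Tendsto (fun i : ℕ => q * L * (q * r ^ lam) ^ i) atTop (𝓝 0) := by
    simpa using (tendsto_pow_atTop_nhds_zero_of_lt_one (by positivity) hqr).const_mul (q * L)
  refine tendsto_nhdsLT_of_dist_le_on_Ico hs hs0 hg fun i t ht => ?_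
  obtain ⟨hQ0, hQle⟩ := hQ i t ht
  have ht0 : t < 0 := ht.2.trans (hs (i + 1))
  have habs : |t| ^ lam ≤ (r ^ lam) ^ i := by
    rw [rpow_pow_comm hr]
    exact rpow_le_rpow (abs_nonneg t) (by rw [abs_of_neg ht0]; linarith [hdecay i, ht.1]) hlam
  rw [Real.dist_eq, sub_zero, abs_of_nonneg (by positivity)]
  calc Q t * |t| ^ lam ≤ q ^ (i + 1) * L * (r ^ lam) ^ i :=
        mul_le_mul hQle habs (by positivity) (hQ0.trans hQle)
    _ = q * L * (q * r ^ lam) ^ i := by ring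

theorem exists_lt_two_mul_exp_neg_div_rpow_lt_one {C ε lam : ℝ} (hC : 0 < C) (hε : 0 < ε)
    (hlam : C * log 2 / ε < lam) : ∃ c, C < c ∧ 2 * exp (-(ε / c)) ^ lam < 1 := by
  have hlog2 : 0 < log 2 := log_pos one_lt_two
  obtain ⟨c, hCc, hc⟩ := exists_between ((lt_div_iff₀ hlog2).mpr ((div_lt_iff₀ hε).mp hlam))
  refine ⟨c, hCc, ?_⟩
  rw [← exp_mul, ← exp_log two_pos, ← exp_add, exp_lt_one_iff, neg_mul, div_mul_eq_mul_div,
    ← sub_eq_add_neg, sub_neg, lt_div_iff₀ (hC.trans hCc)]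
  linarith [(lt_div_iff₀ hlog2).mp hc]

theorem exists_forall_Ioo_le_div_neg {P : ℝ → ℝ} {a c : ℝ} (ha : a < 0)
    (hP : ∀ᶠ t in 𝓝[<] 0, P t * |t| ≤ c) : ∃ t₀ ∈ Ico a 0, ∀ t ∈ Ioo t₀ 0, P t ≤ c / -t := by
  have hev : ∀ᶠ t in 𝓝[<] 0, P t ≤ c / -t := by
    filter_upwards [hP, self_mem_nhdsWithin] with t ht ht0
    rwa [le_div_iff₀ (neg_pos.mpr ht0), ← abs_of_neg ht0]
  exact (mem_nhdsLT_iff_exists_mem_Ico_Ioo_subset ha).mp hev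

theorem stmt4_general (C ε₀ lam : ℝ) (hC : 0 < C) (hε : 0 < ε₀)
    (hlam : C * Real.log 2 / ε₀ < lam) (Q P : ℝ → ℝ)
    (hQc : ContinuousOn Q (Set.Ico (-1) 0))
    (hQpos : ∀ t ∈ Set.Ico (-1:ℝ) 0, 0 < Q t)
    (hsing : Tendsto Q (nhdsWithin 0 (Set.Iio 0)) atTop)
    (hPbound : ∀ δ > (0:ℝ), ∀ᶠ t in nhdsWithin 0 (Set.Iio 0), P t * |t| ≤ C + δ)
    (hstep : ∀ s s' : ℝ, -1 ≤ s → s < s' → s' < 0 → Q s' = 2 * Q s →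
      (∀ t ∈ Set.Icc (-1:ℝ) s', Q t ≤ Q s') → ε₀ ≤ ∫ t in s..s', P t) :
    Tendsto (fun t => Q t * |t| ^ lam) (nhdsWithin 0 (Set.Iio 0)) (nhds 0) := by
  obtain ⟨c, hCc, h2r⟩ := exists_lt_two_mul_exp_neg_div_rpow_lt_one hC hε hlam
  have hc0 : 0 < c := hC.trans hCc
  obtain ⟨t₀, ht₀, hPt₀⟩ := exists_forall_Ioo_le_div_neg neg_one_lt_zero
    (by simpa using hPbound (c - C) (sub_pos.mpr hCc))
  obtain ⟨K, hK⟩ :=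
    isCompact_Icc.exists_bound_of_continuousOn (hQc.mono (Icc_subset_Ico_right ht₀.2))
  have hlow : ∀ t ∈ Icc (-1) t₀, Q t < |K| + 1 := fun t ht =>
    ((le_abs_self _).trans ((hK t ht).trans (le_abs_self K))).trans_lt (lt_add_one _)
  obtain ⟨s, hsmono, hsI, hsQ, hsle⟩ :=
    exists_hitting_times ht₀.1 ht₀.2 hQc hsing hlow (by positivity) one_lt_two
  have hs₁ : ∀ i, -1 ≤ s i := fun i => ht₀.1.trans (hsI i).1.le
  have hratio : ∀ i, -s (i + 1) ≤ exp (-(ε₀ / c)) * -s i := fun i =>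
    neg_le_exp_mul_neg_of_le_integral (hsmono i.lt_succ_self).le (hsI _).2 hc0
      (fun t ht => hPt₀ t ⟨(hsI i).1.trans_le ht.1, ht.2.trans_lt (hsI _).2⟩)
      (hstep _ _ (hs₁ i) (hsmono i.lt_succ_self) (hsI _).2
        (by rw [hsQ, hsQ, pow_succ']; ring) (by rw [hsQ]; exact hsle _))
  have hdecay : ∀ i, -s i ≤ exp (-(ε₀ / c)) ^ i := fun i =>
    (le_geom (u := fun i => -s i) (exp_pos _).le i fun k _ => hratio k).trans
      (mul_le_of_le_one_right (by positivity) (by linarith [hs₁ 0]))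
  refine tendsto_mul_abs_rpow_of_geometric (L := |K| + 1) (exp_pos _).le
    (exp_lt_one_iff.mpr (by simp [hε, hc0]))
    ((div_pos (mul_pos hC (log_pos one_lt_two)) hε).trans hlam).le zero_le_two h2r
    (fun i => (hsI i).2) hdecay fun i t ht => ?_
  have ht₁ : -1 ≤ t := (hs₁ i).trans ht.1
  exact ⟨(hQpos t ⟨ht₁, ht.2.trans (hsI _).2⟩).le, hsle (i + 1) t ⟨ht₁, ht.2.le⟩⟩

theorem stmt4 (C ε₀ lam : ℝ) (hC : 0 < C) (hε : 0 < ε₀)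
    (hlam : C * Real.log 2 / ε₀ < lam) (Q P : ℝ → ℝ)
    (hQc : ContinuousOn Q (Set.Ico (-1) 0))
    (hQpos : ∀ t ∈ Set.Ico (-1:ℝ) 0, 0 < Q t)
    (hsing : Tendsto Q (nhdsWithin 0 (Set.Iio 0)) atTop)
    (hP : ∀ t ∈ Set.Ico (-1:ℝ) 0, 0 ≤ P t)
    (hPbound : ∀ δ > (0:ℝ), ∀ᶠ t in nhdsWithin 0 (Set.Iio 0), P t * |t| ≤ C + δ)
    (hstep : ∀ s s' : ℝ, -1 ≤ s → s < s' → s' < 0 → Q s' = 2 * Q s →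
      (∀ t ∈ Set.Icc (-1:ℝ) s', Q t ≤ Q s') → ε₀ ≤ ∫ t in s..s', P t) :
    Tendsto (fun t => Q t * |t| ^ lam) (nhdsWithin 0 (Set.Iio 0)) (nhds 0) :=
  stmt4_general C ε₀ lam hC hε hlam Q P hQc hQpos hsing hPbound hstep
end

section
/- With notation as in the previous results: if Q : [-1,0) → (0,∞) is continuous, Q(t)√(−t) has limsup ≥ δ₀ > 0 as t → 0⁻ (type-I lower bound), and for every C ≥ 0 with limsup_{t→0⁻} P(t)|t| = C and every δ > 0 one has Q(t) = o(|t|^{−(C+δ)log2/ε₀}), then C ≥ ε₀/(2 log 2). In particular, limsup_{t→0⁻} P(t)|t| ≥ ε₀/(2 log 2) > 0. -/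
open Filter

theorem stmt5 (δ₀ ε₀ C : ℝ) (hδ₀ : 0 < δ₀) (hε₀ : 0 < ε₀) (hC : 0 ≤ C)
    (Q P : ℝ → ℝ) (hQc : ContinuousOn Q (Set.Ico (-1) 0))
    (hQpos : ∀ t ∈ Set.Ico (-1:ℝ) 0, 0 < Q t)
    (hPnn : ∀ t ∈ Set.Ico (-1:ℝ) 0, 0 ≤ P t)
    (htypeI : δ₀ ≤ limsup (fun t => Q t * Real.sqrt (-t)) (nhdsWithin 0 (Set.Iio 0)))
    (hlimsup : limsup (fun t => P t * |t|) (nhdsWithin 0 (Set.Iio 0)) = C)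
    (hupper : ∀ δ > (0:ℝ), Tendsto
      (fun t => Q t * |t| ^ ((C + δ) * Real.log 2 / ε₀))
      (nhdsWithin 0 (Set.Iio 0)) (nhds 0)) :
    ε₀ / (2 * Real.log 2) ≤ C ∧
      ε₀ / (2 * Real.log 2) ≤
        limsup (fun t => P t * |t|) (nhdsWithin 0 (Set.Iio 0)) := by
  have hlog : 0 < Real.log 2 := Real.log_pos (by norm_num)
  have key : ε₀ / (2 * Real.log 2) ≤ C := by
    by_contra hlt
    push_neg at hlt
    set δ : ℝ := ε₀ / (2 * Real.log 2) - C with hδdef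
    have hδpos : 0 < δ := by simp [hδdef]; linarith
    have hexp : (C + δ) * Real.log 2 / ε₀ = 1 / 2 := by
      rw [hδdef]
      field_simp
      ring
    have h0 := hupper δ hδpos
    rw [hexp] at h0
    have heq : (fun t => Q t * Real.sqrt (-t)) =ᶠ[nhdsWithin 0 (Set.Iio 0)]
        (fun t => Q t * |t| ^ ((1:ℝ) / 2)) := by
      filter_upwards [self_mem_nhdsWithin] with t ht
      have ht' : t < 0 := ht
      rw [abs_of_neg ht', Real.sqrt_eq_rpow]
    have hT : Tendsto (fun t => Q t * Real.sqrt (-t)) (nhdsWithin 0 (Set.Iio 0)) (nhds 0) :=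
      h0.congr' heq.symm
    have : limsup (fun t => Q t * Real.sqrt (-t)) (nhdsWithin 0 (Set.Iio 0)) = 0 :=
      hT.limsup_eq
    rw [this] at htypeI
    linarith
  exact ⟨key, by rw [hlimsup]; exact key⟩
end

section
/- Let Q : [−Q₀^{−2}, 0] → (0,∞) be a continuous function with Q(0) = Q₀ > 0, and suppose that at every point t where Q is 'locally maximal relative to the barrier' the differential inequality dQ/dt ≥ −A·Q^{3−α} holds in the Dini sense, for constants A > 0 and α ∈ (0,1). Define the barrier b(t) = 2/√(Q₀^{−2} + t). If Q₀ > 2^{(3−α)/α} A^{1/α}, then the set I = {t ∈ [−Q₀^{−2}, 0] : Q(t) ≥ b(t)} cannot have an infimum t̲ with Q(t̲) = b(t̲) at which dQ/dt ≤ db/dt, because the inequality −A·Q(t̲)^{3−α} ≤ b'(t̲) = −(Q₀^{−2}+t̲)^{−3/2} would force Q₀ ≤ 2^{(3−α)/α} A^{1/α}, a contradiction. -/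
theorem stmt7 (A α Q₀ t : ℝ) (hA : 0 < A) (hα0 : 0 < α) (hα1 : α < 1)
    (hQ₀ : 0 < Q₀) (hbig : (2:ℝ) ^ ((3 - α) / α) * A ^ (1 / α) < Q₀)
    (ht : t ∈ Set.Ioc (-(Q₀ ^ 2)⁻¹) 0) (Qt : ℝ)
    (hQt : Qt = 2 / Real.sqrt ((Q₀ ^ 2)⁻¹ + t))
    (hineq : -A * Qt ^ (3 - α) ≤ -((Q₀ ^ 2)⁻¹ + t) ^ (-(3:ℝ) / 2)) :
    False := by
  obtain ⟨ht1, ht2⟩ := ht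
  set s : ℝ := (Q₀ ^ 2)⁻¹ + t with hs_def
  have hQ2 : (0:ℝ) < (Q₀ ^ 2)⁻¹ := by positivity
  have hs : 0 < s := by simp only [hs_def]; linarith
  have hs' : s ≤ (Q₀ ^ 2)⁻¹ := by simp only [hs_def]; linarith
  have hQt' : Qt = 2 * s ^ (-(1/2 : ℝ)) := by
    rw [hQt, Real.rpow_neg hs.le, Real.sqrt_eq_rpow, div_eq_mul_inv]
  have hQpow : Qt ^ (3 - α) = 2 ^ (3 - α) * s ^ (-(1/2 : ℝ) * (3 - α)) := by
    rw [hQt', Real.mul_rpow (by norm_num) (Real.rpow_nonneg hs.le _),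
      ← Real.rpow_mul hs.le]
  have h1 : s ^ (-(3:ℝ) / 2) ≤ A * (2 ^ (3 - α) * s ^ (-(1/2 : ℝ) * (3 - α))) := by
    nlinarith [hineq, hQpow]
  have h2 : (1:ℝ) ≤ A * 2 ^ (3 - α) * s ^ (α / 2) := by
    have hmul := mul_le_mul_of_nonneg_right h1 (Real.rpow_nonneg hs.le ((3:ℝ)/2))
    rw [← Real.rpow_add hs, mul_assoc, mul_assoc, ← Real.rpow_add hs] at hmul
    rw [show (-3:ℝ)/2 + 3/2 = 0 by ring, Real.rpow_zero,
      show -(1/2:ℝ)*(3-α) + 3/2 = α/2 by ring, ← mul_assoc] at hmul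
    exact hmul
  -- s^(α/2) ≤ Q₀^(-α)
  have h3 : s ^ (α / 2) ≤ Q₀ ^ (-α) := by
    calc s ^ (α / 2) ≤ ((Q₀ ^ 2)⁻¹) ^ (α / 2) :=
          Real.rpow_le_rpow hs.le hs' (by positivity)
      _ = Q₀ ^ (-α) := by
          rw [← Real.rpow_neg_one (Q₀ ^ 2), ← Real.rpow_natCast Q₀ 2,
            ← Real.rpow_mul hQ₀.le, ← Real.rpow_mul hQ₀.le]
          norm_num
          ring_nf
  -- hence Q₀^α ≤ A * 2^(3-α)
  have h4 : Q₀ ^ α ≤ A * 2 ^ (3 - α) := by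
    have hQa : (0:ℝ) < Q₀ ^ α := Real.rpow_pos_of_pos hQ₀ α
    have h5 : (1:ℝ) ≤ A * 2 ^ (3 - α) * Q₀ ^ (-α) := by
      have hpos : (0:ℝ) ≤ A * 2 ^ (3 - α) := by positivity
      nlinarith [h2, h3, mul_le_mul_of_nonneg_left h3 hpos]
    have := mul_le_mul_of_nonneg_right h5 hQa.le
    rwa [one_mul, mul_assoc, ← Real.rpow_add hQ₀, neg_add_cancel, Real.rpow_zero,
      mul_one] at this
  -- from hbig: A * 2^(3-α) < Q₀^α
  have h6 : A * 2 ^ (3 - α) < Q₀ ^ α := by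
    have := Real.rpow_lt_rpow (by positivity) hbig hα0
    rw [Real.mul_rpow (by positivity) (by positivity), ← Real.rpow_mul (by norm_num),
      ← Real.rpow_mul hA.le, div_mul_cancel₀ _ (ne_of_gt hα0),
      one_div_mul_cancel (ne_of_gt hα0), Real.rpow_one] at this
    linarith [this]
  linarith
end

section
/- Let Q : [−1, K] → (0, ∞) be continuous with Q(0) = 1, Q(t) ≤ 1 for t ∈ [−1, 0], and suppose the curvature scale F (defined by F(t₀) = sup{s > 0 : sup_{[t₀−s,t₀]} Q² ≤ s^{−1}}) satisfies F(0) = 1. Suppose Q has upper Dini derivative d⁺Q/dt at t = 0. Then the lower Dini derivative of F at 0 satisfies d⁻F/dt(0) ≥ min{0, −2·(d⁺Q/dt)(0)}. -/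
/-!
Fix `a > max (d⁺Q(0)) 0`. For small `ε > 0` we have `Q ≤ 1 + a ε` on `(0, ε]`, and `Q ≤ 1` on
`[-1, 0]`, so `s = (1 + a ε)⁻²` is an admissible scale at time `ε`; hence
`F(ε) ≥ (1 + a ε)⁻²`, a function with derivative `-2a` at `0`, and `d⁻F(0) ≥ -2a`.
If the difference quotients of `Q` are unbounded above, then `d⁺Q(0)` is the junk value `0`, and
`F(ε) ≤ Q(ε)⁻²` makes the difference quotients of `F` unbounded below, so `d⁻F(0)` is `0` as well.
-/

open Filter Set

/-- The lower Dini derivative `d⁻/dt f(t) = liminf_{ε→0⁺} (f(t+ε)−f(t))/ε`. -/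
noncomputable def diniLower (f : ℝ → ℝ) (t : ℝ) : ℝ :=
  liminf (fun ε => (f (t + ε) - f t) / ε) (nhdsWithin 0 (Ioi 0))

/-- The upper Dini derivative `d⁺/dt f(t) = limsup_{ε→0⁺} (f(t+ε)−f(t))/ε`. -/
noncomputable def diniUpper (f : ℝ → ℝ) (t : ℝ) : ℝ :=
  limsup (fun ε => (f (t + ε) - f t) / ε) (nhdsWithin 0 (Ioi 0))

open Topology

section DiniDerivative

variable {f : ℝ → ℝ} {t a : ℝ}

theorem eventually_le_add_mul_of_diniUpper_lt
    (hf : IsBoundedUnder (· ≤ ·) (𝓝[>] 0) fun ε => (f (t + ε) - f t) / ε)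
    (ha : diniUpper f t < a) : ∀ᶠ ε in 𝓝[>] 0, f (t + ε) ≤ f t + a * ε := by
  filter_upwards [eventually_lt_of_limsup_lt ha hf, self_mem_nhdsWithin] with ε hε hε0
  rw [div_lt_iff₀ hε0] at hε
  linarith

theorem frequently_add_mul_lt_of_not_isBoundedUnder
    (hf : ¬IsBoundedUnder (· ≤ ·) (𝓝[>] 0) fun ε => (f (t + ε) - f t) / ε) (a : ℝ) :
    ∃ᶠ ε in 𝓝[>] 0, f t + a * ε < f (t + ε) := by
  have hfreq : ∃ᶠ ε in 𝓝[>] 0, a < (f (t + ε) - f t) / ε := by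
    by_contra h
    exact hf ⟨a, by simpa [not_frequently] using h⟩
  refine (hfreq.and_eventually self_mem_nhdsWithin).mono fun ε ⟨hε, hε0⟩ => ?_
  rw [lt_div_iff₀ hε0] at hε
  linarith

end DiniDerivative

/-- For real functions `liminf` takes the junk value `0` when `v` is not cobounded, hence
`c ≤ 0`. -/
theorem le_liminf_of_tendsto_of_eventuallyLE {α : Type*} {l : Filter α} [l.NeBot]
    {u v : α → ℝ} {c : ℝ} (hc : c ≤ 0) (hu : Tendsto u l (𝓝 c)) (huv : u ≤ᶠ[l] v) :
    c ≤ liminf v l := by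
  by_cases hv : IsCoboundedUnder (· ≥ ·) l v
  · rw [← hu.liminf_eq]
    exact liminf_le_liminf huv hu.isBoundedUnder_ge hv
  · rw [Real.liminf_of_not_isCoboundedUnder hv]
    exact hc

theorem tendsto_slope_inv_one_add_mul_sq (a : ℝ) :
    Tendsto (fun ε => (((1 + a * ε) ^ 2)⁻¹ - 1) / ε) (𝓝[>] 0) (𝓝 (-2 * a)) := by
  have hderiv : HasDerivAt (fun x => ((1 + a * x) ^ 2)⁻¹) (-2 * a) 0 :=
    (((((hasDerivAt_id' 0).const_mul a).const_add 1).fun_pow 2).fun_inv (by simp)).congr_deriv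
      (by norm_num)
  convert hderiv.tendsto_slope_zero_right using 2 with ε
  simp [div_eq_inv_mul]

section CurvatureScale

variable {Q : ℝ → ℝ} {t₀ s c a : ℝ}

def IsAdmissibleScale (Q : ℝ → ℝ) (t₀ s : ℝ) : Prop :=
  0 < s ∧ ∀ t ∈ Icc (t₀ - s) t₀, Q t ^ 2 ≤ s⁻¹

noncomputable def curvatureScale (Q : ℝ → ℝ) (t₀ : ℝ) : ℝ :=
  sSup {s | IsAdmissibleScale Q t₀ s}

theorem IsAdmissibleScale.le_inv_sq (hs : IsAdmissibleScale Q t₀ s) (hc : 0 < c)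
    (hcQ : c ≤ Q t₀) : s ≤ (c ^ 2)⁻¹ := by
  have hQs : c ^ 2 ≤ s⁻¹ :=
    (pow_le_pow_left₀ hc.le hcQ 2).trans (hs.2 t₀ ⟨by linarith [hs.1], le_rfl⟩)
  simpa using inv_anti₀ (by positivity) hQs

theorem IsAdmissibleScale.le_curvatureScale (hs : IsAdmissibleScale Q t₀ s) (hQ : 0 < Q t₀) :
    s ≤ curvatureScale Q t₀ :=
  le_csSup ⟨_, fun _ h => h.le_inv_sq hQ le_rfl⟩ hs

theorem curvatureScale_le_inv_sq (hc : 0 < c) (hcQ : c ≤ Q t₀) :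
    curvatureScale Q t₀ ≤ (c ^ 2)⁻¹ :=
  Real.sSup_le (fun _ h => h.le_inv_sq hc hcQ) (by positivity)

theorem isAdmissibleScale_of_le_one (hs : 0 < s) (hs1 : s ≤ 1) (ht₀ : 0 ≤ t₀)
    (hpast : ∀ t ∈ Icc (-1) 0, Q t ^ 2 ≤ 1) (hfuture : ∀ t ∈ Ioc 0 t₀, Q t ^ 2 ≤ s⁻¹) :
    IsAdmissibleScale Q t₀ s := by
  refine ⟨hs, fun t ⟨ht, ht'⟩ => ?_⟩
  rcases le_or_gt t 0 with htn | htp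
  · exact (hpast t ⟨by linarith, htn⟩).trans ((one_le_inv₀ hs).2 hs1)
  · exact hfuture t ⟨htp, ht'⟩

theorem eventually_inv_one_add_mul_sq_le_curvatureScale (ha : 0 ≤ a) (hQ : ∀ t, 0 < Q t)
    (hpast : ∀ t ∈ Icc (-1) 0, Q t ≤ 1) (hfuture : ∀ᶠ t in 𝓝[>] 0, Q t ≤ 1 + a * t) :
    ∀ᶠ ε in 𝓝[>] 0, ((1 + a * ε) ^ 2)⁻¹ ≤ curvatureScale Q ε := by
  obtain ⟨η, hη, hsub⟩ := mem_nhdsGT_iff_exists_Ioo_subset.mp hfuture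
  filter_upwards [Ioo_mem_nhdsGT hη] with ε ⟨hε, hεη⟩
  have h1 : 1 ≤ 1 + a * ε := by nlinarith
  refine (isAdmissibleScale_of_le_one (by positivity) (inv_le_one_of_one_le₀ (one_le_pow₀ h1))
    hε.le (fun t ht => pow_le_one₀ (hQ t).le (hpast t ht)) fun t ⟨ht, htε⟩ => ?_).le_curvatureScale
    (hQ ε)
  rw [inv_inv]
  have hQt : Q t ≤ 1 + a * ε := (hsub ⟨ht, htε.trans_lt hεη⟩).trans (by nlinarith)
  exact pow_le_pow_left₀ (hQ t).le hQt 2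

theorem neg_two_mul_le_diniLower_curvatureScale (ha : 0 ≤ a) (hQ : ∀ t, 0 < Q t)
    (hpast : ∀ t ∈ Icc (-1) 0, Q t ≤ 1) (hfuture : ∀ᶠ t in 𝓝[>] 0, Q t ≤ 1 + a * t)
    (hF0 : curvatureScale Q 0 = 1) : -2 * a ≤ diniLower (curvatureScale Q) 0 := by
  refine le_liminf_of_tendsto_of_eventuallyLE (by linarith) (tendsto_slope_inv_one_add_mul_sq a) ?_
  filter_upwards [eventually_inv_one_add_mul_sq_le_curvatureScale ha hQ hpast hfuture,
    self_mem_nhdsWithin] with ε hε hε0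
  rw [zero_add, hF0]
  exact div_le_div_of_nonneg_right (by linarith) (le_of_lt hε0)

theorem diniLower_curvatureScale_eq_zero (hQ0 : Q 0 = 1) (hF0 : curvatureScale Q 0 = 1)
    (hunbdd : ¬IsBoundedUnder (· ≤ ·) (𝓝[>] 0) fun ε => (Q (0 + ε) - Q 0) / ε) :
    diniLower (curvatureScale Q) 0 = 0 := by
  refine Real.liminf_of_not_isBoundedUnder fun ⟨m, hm⟩ => ?_
  obtain ⟨B, hB0, hB⟩ : ∃ B, 0 ≤ B ∧ -2 * B < m :=
    ⟨|m| + 1, by positivity, by linarith [neg_abs_le m, abs_nonneg m]⟩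
  have hslope := (tendsto_slope_inv_one_add_mul_sq B).eventually (gt_mem_nhds hB)
  obtain ⟨ε, hQε, hmε, hslope, hε⟩ :=
    ((frequently_add_mul_lt_of_not_isBoundedUnder hunbdd B).and_eventually
      ((eventually_map.1 hm).and (hslope.and self_mem_nhdsWithin))).exists
  rw [zero_add, hQ0] at hQε
  rw [zero_add, hF0] at hmε
  have hFε : curvatureScale Q ε ≤ ((1 + B * ε) ^ 2)⁻¹ :=
    curvatureScale_le_inv_sq (by positivity) hQε.le
  have : (curvatureScale Q ε - 1) / ε ≤ (((1 + B * ε) ^ 2)⁻¹ - 1) / ε :=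
    div_le_div_of_nonneg_right (by linarith) (le_of_lt hε)
  linarith

end CurvatureScale

theorem stmt13_general (Q : ℝ → ℝ)
    (hQpos : ∀ t, 0 < Q t)
    (hQ0 : Q 0 = 1) (hQle : ∀ t ∈ Set.Icc (-1:ℝ) 0, Q t ≤ 1)
    (F : ℝ → ℝ)
    (hFdef : ∀ t₀ : ℝ,
      F t₀ = sSup {s : ℝ | 0 < s ∧ ∀ t ∈ Set.Icc (t₀ - s) t₀, Q t ^ 2 ≤ s⁻¹})
    (hF0 : F 0 = 1) :
    min 0 (-2 * diniUpper Q 0) ≤ diniLower F 0 := by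
  obtain rfl : F = curvatureScale Q := funext hFdef
  by_cases hbdd : IsBoundedUnder (· ≤ ·) (𝓝[>] 0) fun ε => (Q (0 + ε) - Q 0) / ε
  · have key : ∀ δ > 0, -2 * max (diniUpper Q 0) 0 - δ ≤ diniLower (curvatureScale Q) 0 := by
      intro δ hδ
      have hlt : diniUpper Q 0 < max (diniUpper Q 0) 0 + δ / 2 := by
        linarith [le_max_left (diniUpper Q 0) 0]
      have hfuture := eventually_le_add_mul_of_diniUpper_lt hbdd hlt
      simp only [zero_add, hQ0] at hfuture
      have := neg_two_mul_le_diniLower_curvatureScale (by positivity) hQpos hQle hfuture hF0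
      linarith
    have hmin : min 0 (-2 * diniUpper Q 0) = -2 * max (diniUpper Q 0) 0 := by
      rw [min_def, max_def]
      split_ifs <;> linarith
    exact hmin ▸ le_of_forall_sub_le key
  · rw [diniLower_curvatureScale_eq_zero hQ0 hF0 hbdd, diniUpper,
      Real.limsup_of_not_isBoundedUnder hbdd, mul_zero, min_self]

theorem stmt13 (K : ℝ) (hK : 0 ≤ K) (Q : ℝ → ℝ)
    (hQc : ContinuousOn Q (Set.Icc (-1) K)) (hQpos : ∀ t, 0 < Q t)
    (hQ0 : Q 0 = 1) (hQle : ∀ t ∈ Set.Icc (-1:ℝ) 0, Q t ≤ 1)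
    (F : ℝ → ℝ)
    (hFdef : ∀ t₀ : ℝ,
      F t₀ = sSup {s : ℝ | 0 < s ∧ ∀ t ∈ Set.Icc (t₀ - s) t₀, Q t ^ 2 ≤ s⁻¹})
    (hF0 : F 0 = 1) :
    min 0 (-2 * diniUpper Q 0) ≤ diniLower F 0 :=
  stmt13_general Q hQpos hQ0 hQle F hFdef hF0
end
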